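/- arXiv:2007.13442 — 2 statements merged into one kernel-verified Lean document; each statement's English description precedes it below -/
import Mathlib

section
/- Let S be a finite set, let p, q ∈ Σ_S, let α > 0, and let f : S → ℝ satisfy 0 ≤ f(s) ≤ b for all s ∈ S. If KL(p, q) ≤ α, then both Var_q(f) ≤ 2 · Var_p(f) + 4 b² α and Var_p(f) ≤ 2 · Var_q(f) + 4 b² α. -/
/-! Proof idea: the squared Hellinger distance `H² = ∑ (√p - √q)²` is at most `KL(p, q)`, and
`q ≤ 2 p + 2 (√q - √p)²` pointwise (from `(x + y)² ≤ 2x² + 2y²`). Integrating `(f - pf)² ∈ [0, b²]`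
against this gives `Var_q f ≤ ∑ q (f - pf)² ≤ 2 Var_p f + 2 b² H²`, and `H²` is symmetric. -/

open Finset

/-- Kullback–Leibler divergence between two finitely supported distributions, with the
conventions `0 · log(0/x) = 0` and `KL(p,q) = +∞` when `p(s) > 0` while `q(s) = 0`. -/
noncomputable def KLdiv {S : Type*} [Fintype S] (p q : S → ℝ) : EReal :=
  ∑ s, if p s = 0 then (0 : EReal)
    else if q s = 0 then (⊤ : EReal)
    else ((p s * Real.log (p s / q s) : ℝ) : EReal)

theorem EReal.coe_finsetSum {ι : Type*} (s : Finset ι) (f : ι → ℝ) :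
    ((∑ i ∈ s, f i : ℝ) : EReal) = ∑ i ∈ s, (f i : EReal) :=
  map_sum (⟨⟨Real.toEReal, EReal.coe_zero⟩, EReal.coe_add⟩ : ℝ →+ EReal) f s

noncomputable def hellingerSq {S : Type*} [Fintype S] (p q : S → ℝ) : ℝ :=
  ∑ s, (√(p s) - √(q s)) ^ 2

theorem hellingerSq_comm {S : Type*} [Fintype S] (p q : S → ℝ) :
    hellingerSq p q = hellingerSq q p := by
  simp only [hellingerSq, sub_sq_comm]

theorem hellingerSq_nonneg {S : Type*} [Fintype S] (p q : S → ℝ) : 0 ≤ hellingerSq p q :=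
  sum_nonneg fun _ _ => sq_nonneg _

theorem two_mul_sub_sqrt_mul_sqrt_le_mul_log_div {p q : ℝ} (hp : 0 < p) (hq : 0 < q) :
    2 * (p - √p * √q) ≤ p * Real.log (p / q) := by
  have hr : 0 < √q / √p := div_pos (Real.sqrt_pos.2 hq) (Real.sqrt_pos.2 hp)
  have hlog : Real.log (p / q) = -2 * Real.log (√q / √p) := by
    rw [Real.log_div hp.ne' hq.ne', Real.log_div (Real.sqrt_pos.2 hq).ne' (Real.sqrt_pos.2 hp).ne',
      Real.log_sqrt hp.le, Real.log_sqrt hq.le]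
    ring
  have hpr : p * (√q / √p) = √p * √q := by
    have hsqrt_ne : √p ≠ 0 := (Real.sqrt_pos.2 hp).ne'
    field_simp
    rw [Real.sq_sqrt hp.le]
  rw [hlog]
  nlinarith [Real.log_le_sub_one_of_pos hr]

theorem hellingerSq_le_KLdiv {S : Type*} [Fintype S] {p q : S → ℝ} (hp : ∀ s, 0 ≤ p s)
    (hq : ∀ s, 0 ≤ q s) (hsum : ∑ s, q s ≤ ∑ s, p s) :
    (hellingerSq p q : EReal) ≤ KLdiv p q := by
  have hH : hellingerSq p q ≤ ∑ s, 2 * (p s - √(p s) * √(q s)) := by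
    have hterm : ∀ s, (√(p s) - √(q s)) ^ 2 = 2 * (p s - √(p s) * √(q s)) + (q s - p s) := by
      intro s
      nlinarith [Real.sq_sqrt (hp s), Real.sq_sqrt (hq s)]
    simp only [hellingerSq, hterm, sum_add_distrib, sum_sub_distrib]
    linarith
  refine (EReal.coe_le_coe_iff.2 hH).trans ?_
  rw [EReal.coe_finsetSum, KLdiv]
  refine sum_le_sum fun s _ => ?_
  split_ifs with hp0 hq0
  · simp [hp0]
  · exact le_top
  · exact EReal.coe_le_coe_iff.2 <| two_mul_sub_sqrt_mul_sqrt_le_mul_log_div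
      ((hp s).lt_of_ne' hp0) ((hq s).lt_of_ne' hq0)

theorem le_two_mul_add_two_mul_sq_sqrt_sub {p q : ℝ} (hp : 0 ≤ p) (hq : 0 ≤ q) :
    q ≤ 2 * p + 2 * (√q - √p) ^ 2 := by
  calc q = (√p + (√q - √p)) ^ 2 := by rw [add_sub_cancel, Real.sq_sqrt hq]
    _ ≤ 2 * (√p ^ 2 + (√q - √p) ^ 2) := add_sq_le
    _ = 2 * p + 2 * (√q - √p) ^ 2 := by rw [Real.sq_sqrt hp]; ring

theorem sum_mul_le_two_mul_sum_mul_add_hellingerSq {S : Type*} [Fintype S] {p q g : S → ℝ}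
    (hp : ∀ s, 0 ≤ p s) (hq : ∀ s, 0 ≤ q s) {c : ℝ} (hg : ∀ s, g s ∈ Set.Icc 0 c) :
    ∑ s, q s * g s ≤ 2 * ∑ s, p s * g s + 2 * c * hellingerSq q p := by
  rw [mul_sum, hellingerSq, mul_sum, ← sum_add_distrib]
  refine sum_le_sum fun s _ => ?_
  calc q s * g s ≤ (2 * p s + 2 * (√(q s) - √(p s)) ^ 2) * g s :=
        mul_le_mul_of_nonneg_right (le_two_mul_add_two_mul_sq_sqrt_sub (hp s) (hq s)) (hg s).1
    _ ≤ 2 * (p s * g s) + 2 * c * (√(q s) - √(p s)) ^ 2 := by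
        nlinarith [mul_le_mul_of_nonneg_left (hg s).2 (sq_nonneg (√(q s) - √(p s)))]

noncomputable def weightedMean {S : Type*} [Fintype S] (p f : S → ℝ) : ℝ :=
  ∑ s, p s * f s

noncomputable def weightedVar {S : Type*} [Fintype S] (p f : S → ℝ) : ℝ :=
  ∑ s, p s * (f s - weightedMean p f) ^ 2

theorem weightedMean_mem_Icc {S : Type*} [Fintype S] {p f : S → ℝ} (hp : ∀ s, 0 ≤ p s)
    (hpsum : ∑ s, p s = 1) {a b : ℝ} (hf : ∀ s, f s ∈ Set.Icc a b) :
    weightedMean p f ∈ Set.Icc a b := by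
  have hconst (c : ℝ) : ∑ s, p s * c = c := by rw [← sum_mul, hpsum, one_mul]
  constructor
  · calc a = ∑ s, p s * a := (hconst a).symm
      _ ≤ weightedMean p f := sum_le_sum fun s _ => mul_le_mul_of_nonneg_left (hf s).1 (hp s)
  · calc weightedMean p f ≤ ∑ s, p s * b :=
          sum_le_sum fun s _ => mul_le_mul_of_nonneg_left (hf s).2 (hp s)
      _ = b := hconst b

theorem weightedVar_le_sum_mul_sq_sub {S : Type*} [Fintype S] {p : S → ℝ}
    (hpsum : ∑ s, p s = 1) (f : S → ℝ) (c : ℝ) :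
    weightedVar p f ≤ ∑ s, p s * (f s - c) ^ 2 := by
  set μ := weightedMean p f
  have hterm : ∀ s, p s * (f s - c) ^ 2 - p s * (f s - μ) ^ 2
      = (μ - c) * (2 * (p s * f s) - (μ + c) * p s) := fun s => by ring
  have hgap : ∑ s, p s * (f s - c) ^ 2 - weightedVar p f = (μ - c) ^ 2 := by
    rw [weightedVar, ← sum_sub_distrib, sum_congr rfl fun s _ => hterm s, ← mul_sum,
      sum_sub_distrib, ← mul_sum, ← mul_sum, hpsum]
    change (μ - c) * (2 * μ - (μ + c) * 1) = (μ - c) ^ 2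
    ring
  nlinarith [sq_nonneg (μ - c)]

theorem weightedVar_le_two_mul_weightedVar_add_hellingerSq {S : Type*} [Fintype S]
    {p q f : S → ℝ} (hp : ∀ s, 0 ≤ p s) (hpsum : ∑ s, p s = 1) (hq : ∀ s, 0 ≤ q s)
    (hqsum : ∑ s, q s = 1) {b : ℝ} (hf : ∀ s, f s ∈ Set.Icc 0 b) :
    weightedVar q f ≤ 2 * weightedVar p f + 2 * b ^ 2 * hellingerSq q p := by
  have hμ := weightedMean_mem_Icc hp hpsum hf
  have hdev : ∀ s, (f s - weightedMean p f) ^ 2 ∈ Set.Icc 0 (b ^ 2) := fun s =>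
    ⟨sq_nonneg _, sq_le_sq' (by linarith [(hf s).1, hμ.2]) (by linarith [(hf s).2, hμ.1])⟩
  exact (weightedVar_le_sum_mul_sq_sub hqsum f (weightedMean p f)).trans
    (sum_mul_le_two_mul_sum_mul_add_hellingerSq hp hq hdev)

theorem variance_comparison_via_kl_general {S : Type*} [Fintype S]
    (p q : S → ℝ) (hp : ∀ s, 0 ≤ p s) (hpsum : ∑ s, p s = 1)
    (hq : ∀ s, 0 ≤ q s) (hqsum : ∑ s, q s = 1)
    (α : ℝ)
    (b : ℝ) (f : S → ℝ) (hf : ∀ s, 0 ≤ f s ∧ f s ≤ b)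
    (hKL : KLdiv p q ≤ (α : EReal)) :
    (∑ s, q s * (f s - ∑ s', q s' * f s') ^ 2)
        ≤ 2 * (∑ s, p s * (f s - ∑ s', p s' * f s') ^ 2) + 4 * b ^ 2 * α
    ∧ (∑ s, p s * (f s - ∑ s', p s' * f s') ^ 2)
        ≤ 2 * (∑ s, q s * (f s - ∑ s', q s' * f s') ^ 2) + 4 * b ^ 2 * α := by
  have hH : hellingerSq p q ≤ α := EReal.coe_le_coe_iff.1 <|
    (hellingerSq_le_KLdiv hp hq (hqsum.trans hpsum.symm).le).trans hKL
  have hslack : 2 * b ^ 2 * hellingerSq p q ≤ 4 * b ^ 2 * α := by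
    linarith [mul_le_mul_of_nonneg_left hH (sq_nonneg b),
      mul_nonneg (sq_nonneg b) (hellingerSq_nonneg p q)]
  constructor
  · calc weightedVar q f ≤ 2 * weightedVar p f + 2 * b ^ 2 * hellingerSq q p :=
          weightedVar_le_two_mul_weightedVar_add_hellingerSq hp hpsum hq hqsum hf
      _ ≤ 2 * weightedVar p f + 4 * b ^ 2 * α := by rw [hellingerSq_comm]; linarith
  · calc weightedVar p f ≤ 2 * weightedVar q f + 2 * b ^ 2 * hellingerSq p q :=
          weightedVar_le_two_mul_weightedVar_add_hellingerSq hq hqsum hp hpsum hf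
      _ ≤ 2 * weightedVar q f + 4 * b ^ 2 * α := by linarith

/-- If `KL(p,q) ≤ α` then the variances of a `[0,b]`-valued function under
`p` and under `q` are within a factor `2` of each other up to an additive `4 b² α`. -/
theorem variance_comparison_via_kl {S : Type*} [Fintype S]
    (p q : S → ℝ) (hp : ∀ s, 0 ≤ p s) (hpsum : ∑ s, p s = 1)
    (hq : ∀ s, 0 ≤ q s) (hqsum : ∑ s, q s = 1)
    (α : ℝ) (hα : 0 < α)
    (b : ℝ) (f : S → ℝ) (hf : ∀ s, 0 ≤ f s ∧ f s ≤ b)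
    (hKL : KLdiv p q ≤ (α : EReal)) :
    (∑ s, q s * (f s - ∑ s', q s' * f s') ^ 2)
        ≤ 2 * (∑ s, p s * (f s - ∑ s', p s' * f s') ^ 2) + 4 * b ^ 2 * α
    ∧ (∑ s, p s * (f s - ∑ s', p s' * f s') ^ 2)
        ≤ 2 * (∑ s, q s * (f s - ∑ s', q s' * f s') ^ 2) + 4 * b ^ 2 * α :=
  variance_comparison_via_kl_general p q hp hpsum hq hqsum α b f hf hKL
end

section
/- Let S be a finite set, let p, q ∈ Σ_S, and let f : S → ℝ satisfy 0 ≤ f(s) ≤ 1 for all s ∈ S. If qf > pf, then KL(p, q) ≥ (qf − pf)² / ( 2·( Var_q(f) + (qf − pf)/3 ) ). -/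
/-! The bound is a Bernstein-type consequence of the Donsker–Varadhan inequality
`p g - log (q e^g) ≤ KL(p, q)`, applied to the tilt `g = λ (qf - f)`. Since `g ≤ λ < 3`, the
Padé-type estimate `(3 - x) e^x ≤ 3 + 2x + x²/2` gives
`log (q e^g) ≤ λ² Var_q(f) / (2 (1 - λ/3))`, hence
`KL(p, q) ≥ λ (qf - pf) - λ² Var_q(f) / (2 (1 - λ/3))`, and the choice
`λ = (qf - pf) / (Var_q(f) + (qf - pf)/3)` turns the right-hand side into the claimed bound. -/

open Finset

open Real

namespace Real

lemma three_sub_mul_exp_le (x : ℝ) : (3 - x) * exp x ≤ 3 + 2 * x + x ^ 2 / 2 := by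
  set h : ℝ → ℝ := fun y ↦ 3 + 2 * y + y ^ 2 / 2 - (3 - y) * exp y
  have h' (y : ℝ) : HasDerivAt h (2 + y + (y - 2) * exp y) y := by
    refine (((((hasDerivAt_id y).const_mul 2).const_add 3).add
      ((hasDerivAt_pow 2 y).div_const 2)).sub
        (((hasDerivAt_id y).const_sub 3).mul (hasDerivAt_exp y))).congr_deriv ?_
    simp only [id, Nat.cast_ofNat]; ring
  have h'' (y : ℝ) : HasDerivAt (fun y ↦ 2 + y + (y - 2) * exp y) (1 + (y - 1) * exp y) y := by
    refine (((hasDerivAt_id y).const_add 2).add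
      (((hasDerivAt_id y).sub_const 2).mul (hasDerivAt_exp y))).congr_deriv ?_
    simp only [id]; ring
  have h''_nonneg (y : ℝ) : 0 ≤ 1 + (y - 1) * exp y := by
    have := mul_le_mul_of_nonneg_right (one_sub_le_exp_neg y) (exp_pos y).le
    rw [← exp_add, neg_add_cancel, exp_zero] at this
    linarith
  have hconvex : ConvexOn ℝ Set.univ h :=
    convexOn_of_hasDerivWithinAt2_nonneg convex_univ
      (fun y _ ↦ (h' y).continuousAt.continuousWithinAt) (fun y _ ↦ (h' y).hasDerivWithinAt)
      (fun y _ ↦ (h'' y).hasDerivWithinAt) (fun y _ ↦ h''_nonneg y)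
  have hmin : IsMinOn h Set.univ 0 := by
    refine hconvex.isMinOn_of_rightDeriv_eq_zero (by simp) ?_
    rw [(h' 0).hasDerivWithinAt.derivWithin (uniqueDiffWithinAt_Ioi 0)]
    simp
  have : h 0 ≤ h x := hmin (Set.mem_univ x)
  norm_num [h] at this
  linarith

lemma exp_le_one_add_add_sq_div {x c : ℝ} (hxc : x ≤ c) (hc : c < 3) :
    exp x ≤ 1 + x + x ^ 2 / (2 * (1 - c / 3)) := by
  have hx : 0 < 3 - x := by linarith
  calc exp x ≤ (3 + 2 * x + x ^ 2 / 2) / (3 - x) := by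
        rw [le_div_iff₀ hx, mul_comm]; exact three_sub_mul_exp_le x
    _ = 1 + x + x ^ 2 / (2 * (1 - x / 3)) := by field_simp; ring
    _ ≤ 1 + x + x ^ 2 / (2 * (1 - c / 3)) := by gcongr; linarith

lemma sub_le_mul_log_div {a b : ℝ} (ha : 0 ≤ a) (hb : 0 < b) : a - b ≤ a * log (a / b) := by
  rcases ha.eq_or_lt with rfl | ha
  · simpa using hb.le
  have := mul_le_mul_of_nonneg_left (one_sub_inv_le_log_of_pos (div_pos ha hb)) ha.le
  rwa [inv_div, mul_sub, mul_one, mul_div_cancel₀ _ ha.ne'] at this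

end Real

lemma EReal.coe_finset_sum {ι : Type*} (t : Finset ι) (a : ι → ℝ) :
    ((∑ i ∈ t, a i : ℝ) : EReal) = ∑ i ∈ t, (a i : EReal) :=
  map_sum (⟨⟨(↑), EReal.coe_zero⟩, EReal.coe_add⟩ : ℝ →+ EReal) a t

section Finite

variable {S : Type*} [Fintype S] {p q : S → ℝ}

lemma sum_mul_exp_pos (hq : ∀ s, 0 ≤ q s) {s₀ : S} (hs₀ : q s₀ ≠ 0) (g : S → ℝ) :
    0 < ∑ s, q s * exp (g s) :=
  sum_pos' (fun s _ ↦ mul_nonneg (hq s) (exp_pos _).le)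
    ⟨s₀, mem_univ _, mul_pos ((hq s₀).lt_of_ne' hs₀) (exp_pos _)⟩

lemma sum_mul_sub_log_sum_mul_exp_le (hp : ∀ s, 0 ≤ p s) (hpsum : ∑ s, p s = 1)
    (hq : ∀ s, 0 ≤ q s) (hpq : ∀ s, p s ≠ 0 → q s ≠ 0) (g : S → ℝ) :
    ∑ s, p s * g s - log (∑ s, q s * exp (g s)) ≤ ∑ s, p s * log (p s / q s) := by
  set Z := ∑ s, q s * exp (g s)
  obtain ⟨s₀, -, hs₀⟩ := exists_ne_zero_of_sum_ne_zero (hpsum ▸ one_ne_zero)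
  have hZ : 0 < Z := sum_mul_exp_pos hq (hpq s₀ hs₀) g
  -- Gibbs' inequality against the tilted weights `q e^g / Z`, which sum to one
  have hpointwise (s : S) :
      p s - q s * exp (g s) / Z ≤ p s * log (p s / q s) - p s * g s + p s * log Z := by
    rcases eq_or_ne (p s) 0 with hs | hs
    · rw [hs]
      simp only [zero_sub, zero_mul, sub_zero, add_zero, neg_nonpos]
      exact div_nonneg (mul_nonneg (hq s) (exp_pos _).le) hZ.le
    have hqs : 0 < q s := (hq s).lt_of_ne' (hpq s hs)
    have hps : 0 < p s := (hp s).lt_of_ne' hs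
    have hlog : log (p s / (q s * exp (g s) / Z)) = log (p s / q s) - g s + log Z := by
      rw [div_div_eq_mul_div, log_div (by positivity) (by positivity), log_mul hps.ne' hZ.ne',
        log_mul hqs.ne' (exp_pos _).ne', log_exp, log_div hps.ne' hqs.ne']
      ring
    calc p s - q s * exp (g s) / Z ≤ p s * log (p s / (q s * exp (g s) / Z)) :=
          sub_le_mul_log_div (hp s) (by positivity)
      _ = _ := by rw [hlog]; ring
  have := sum_le_sum fun s (_ : s ∈ univ) ↦ hpointwise s
  rw [sum_sub_distrib, ← sum_div, div_self hZ.ne', hpsum, sum_add_distrib, sum_sub_distrib,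
    ← sum_mul, hpsum, one_mul, sub_self] at this
  linarith

lemma log_sum_mul_exp_le (hq : ∀ s, 0 ≤ q s) (hqsum : ∑ s, q s = 1) {g : S → ℝ} {c : ℝ}
    (hg : ∀ s, g s ≤ c) (hc : c < 3) (hmean : ∑ s, q s * g s = 0) :
    log (∑ s, q s * exp (g s)) ≤ (∑ s, q s * g s ^ 2) / (2 * (1 - c / 3)) := by
  obtain ⟨s₀, -, hs₀⟩ := exists_ne_zero_of_sum_ne_zero (hqsum ▸ one_ne_zero)
  have := log_le_sub_one_of_pos (sum_mul_exp_pos hq hs₀ g)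
  suffices ∑ s, q s * exp (g s) ≤ 1 + (∑ s, q s * g s ^ 2) / (2 * (1 - c / 3)) by linarith
  calc ∑ s, q s * exp (g s) ≤ ∑ s, q s * (1 + g s + g s ^ 2 / (2 * (1 - c / 3))) :=
        sum_le_sum fun s _ ↦ mul_le_mul_of_nonneg_left (exp_le_one_add_add_sq_div (hg s) hc) (hq s)
    _ = ∑ s, q s + ∑ s, q s * g s + (∑ s, q s * g s ^ 2) / (2 * (1 - c / 3)) := by
        simp only [mul_add, sum_add_distrib, mul_one, sum_div, mul_div_assoc]
    _ = 1 + (∑ s, q s * g s ^ 2) / (2 * (1 - c / 3)) := by rw [hqsum, hmean, add_zero]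

lemma sum_mul_sq_sub_pos (hpsum : ∑ s, p s = 1) (hq : ∀ s, 0 ≤ q s)
    (hpq : ∀ s, p s ≠ 0 → q s ≠ 0) {f : S → ℝ} {m : ℝ} (hm : ∑ s, p s * f s ≠ m) :
    0 < ∑ s, q s * (f s - m) ^ 2 := by
  refine (sum_nonneg fun s _ ↦ mul_nonneg (hq s) (sq_nonneg _)).lt_of_ne fun hzero ↦ hm ?_
  have hconst (s : S) : p s * f s = p s * m := by
    rcases eq_or_ne (p s) 0 with hs | hs
    · simp [hs]
    have := (sum_eq_zero_iff_of_nonneg fun s _ ↦ mul_nonneg (hq s) (sq_nonneg (f s - m))).mp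
      hzero.symm s (mem_univ s)
    rw [mul_eq_zero, or_iff_right (hpq s hs), sq_eq_zero_iff, sub_eq_zero] at this
    rw [this]
  rw [sum_congr rfl fun s _ ↦ hconst s, ← sum_mul, hpsum, one_mul]

lemma mul_sub_sq_div_le_sum_mul_log_div (hp : ∀ s, 0 ≤ p s) (hpsum : ∑ s, p s = 1)
    (hq : ∀ s, 0 ≤ q s) (hqsum : ∑ s, q s = 1) (hpq : ∀ s, p s ≠ 0 → q s ≠ 0)
    {f : S → ℝ} (hf : ∀ s, 0 ≤ f s ∧ f s ≤ 1) {l : ℝ} (hl₀ : 0 ≤ l) (hl₃ : l < 3) :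
    l * (∑ s, q s * f s - ∑ s, p s * f s)
        - l ^ 2 * (∑ s, q s * (f s - ∑ s', q s' * f s') ^ 2) / (2 * (1 - l / 3))
      ≤ ∑ s, p s * log (p s / q s) := by
  set m := ∑ s, q s * f s
  set g : S → ℝ := fun s ↦ l * (m - f s)
  have hm : m ≤ 1 := hqsum ▸ sum_le_sum fun s _ ↦ mul_le_of_le_one_right (hq s) (hf s).2
  have hg (s : S) : g s ≤ l := mul_le_of_le_one_right hl₀ (by linarith [(hf s).1])
  have hmean : ∑ s, q s * g s = 0 := by
    simp only [g, mul_left_comm (q _), ← mul_sum, mul_sub, sum_sub_distrib, ← sum_mul, hqsum]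
    ring
  have hsq : ∑ s, q s * g s ^ 2 = l ^ 2 * ∑ s, q s * (f s - m) ^ 2 := by
    rw [mul_sum]; exact sum_congr rfl fun s _ ↦ by ring
  have hpg : ∑ s, p s * g s = l * (m - ∑ s, p s * f s) := by
    simp only [g, mul_left_comm (p _), ← mul_sum, mul_sub, sum_sub_distrib, ← sum_mul, hpsum]
    ring
  have hDV := sum_mul_sub_log_sum_mul_exp_le hp hpsum hq hpq g
  have hlog := log_sum_mul_exp_le hq hqsum hg hl₃ hmean
  rw [hpg] at hDV
  rw [hsq] at hlog
  linarith

lemma KLdiv_eq_coe_sum (hpq : ∀ s, p s ≠ 0 → q s ≠ 0) :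
    KLdiv p q = ((∑ s, p s * log (p s / q s) : ℝ) : EReal) := by
  rw [KLdiv, EReal.coe_finset_sum]
  refine sum_congr rfl fun s _ ↦ ?_
  by_cases hs : p s = 0
  · simp [hs]
  · rw [if_neg hs, if_neg (hpq s hs)]

lemma KLdiv_eq_top {s₀ : S} (hp₀ : p s₀ ≠ 0) (hq₀ : q s₀ = 0) : KLdiv p q = ⊤ := by
  classical
  rw [KLdiv, ← add_sum_erase _ _ (mem_univ s₀), if_neg hp₀, if_pos hq₀]
  refine EReal.top_add_of_ne_bot (sum_induction _ (· ≠ ⊥) (fun a b ha hb ↦ ?_) (by simp)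
    fun s _ ↦ ?_)
  · exact EReal.add_ne_bot_iff.mpr ⟨ha, hb⟩
  · split_ifs
    exacts [EReal.zero_ne_bot, top_ne_bot, EReal.coe_ne_bot _]

end Finite

/-- For `p, q` in the simplex over a finite set and `f` with values in
`[0,1]`, if `qf > pf` then
`KL(p,q) ≥ (qf − pf)² / (2 (Var_q(f) + (qf − pf)/3))`. -/
theorem kl_lower_bound {S : Type*} [Fintype S]
    (p q : S → ℝ) (hp : ∀ s, 0 ≤ p s) (hpsum : ∑ s, p s = 1)
    (hq : ∀ s, 0 ≤ q s) (hqsum : ∑ s, q s = 1)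
    (f : S → ℝ) (hf : ∀ s, 0 ≤ f s ∧ f s ≤ 1)
    (hgap : (∑ s, p s * f s) < ∑ s, q s * f s) :
    (((((∑ s, q s * f s) - ∑ s, p s * f s) ^ 2
        / (2 * ((∑ s, q s * (f s - ∑ s', q s' * f s') ^ 2)
            + ((∑ s, q s * f s) - ∑ s, p s * f s) / 3))) : ℝ) : EReal)
      ≤ KLdiv p q := by
  by_cases hpq : ∀ s, p s ≠ 0 → q s ≠ 0
  · rw [KLdiv_eq_coe_sum hpq, EReal.coe_le_coe_iff]
    have hV := sum_mul_sq_sub_pos hpsum hq hpq hgap.ne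
    set V := ∑ s, q s * (f s - ∑ s', q s' * f s') ^ 2
    set D := ∑ s, q s * f s - ∑ s, p s * f s
    have hD : 0 < D := sub_pos.mpr hgap
    have hl₃ : D / (V + D / 3) < 3 := by rw [div_lt_iff₀ (by positivity)]; linarith
    have := mul_sub_sq_div_le_sum_mul_log_div hp hpsum hq hqsum hpq hf (by positivity) hl₃
    have hopt : D / (V + D / 3) * D - (D / (V + D / 3)) ^ 2 * V / (2 * (1 - D / (V + D / 3) / 3))
        = D ^ 2 / (2 * (V + D / 3)) := by
      field_simp
      ring
    linarith
  · push Not at hpq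
    obtain ⟨s₀, hp₀, hq₀⟩ := hpq
    rw [KLdiv_eq_top hp₀ hq₀]
    exact le_top
end
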